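/- The scalar time-varying system x'(t) = (exp(-t²) - 1) x(t) on (-1,1) is not contractive with respect to any norm on ℝ: there do not exist c > 0 such that |x(t₂,t₁,a) - x(t₂,t₁,b)| ≤ exp(-(t₂-t₁)c)|a-b| for all t₂ ≥ t₁ ≥ 0 and a, b ∈ (-1,1). -/
import Mathlib


open Real Set

/-- The error function `erf z = (2/√π) ∫₀^z exp(-s²) ds`. -/
noncomputable def erf (z : ℝ) : ℝ := (2 / Real.sqrt π) * ∫ s in (0:ℝ)..z, Real.exp (-s ^ 2)

/-- `g t = (√π/2) erf t - t`. -/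
noncomputable def g (t : ℝ) : ℝ := (Real.sqrt π / 2) * erf t - t

/-- Solution of `x' = (exp(-t²) - 1) x` with `x(t₁) = a`. -/
noncomputable def sol (t t₁ a : ℝ) : ℝ := Real.exp (g t - g t₁) * a

lemma g_eq (t : ℝ) : g t = ∫ s in (0:ℝ)..t, (Real.exp (-s ^ 2) - 1) := by
  have hπ : Real.sqrt π ≠ 0 := ne_of_gt (Real.sqrt_pos.mpr Real.pi_pos)
  have h1 : (∫ s in (0:ℝ)..t, (Real.exp (-s ^ 2) - 1))
      = (∫ s in (0:ℝ)..t, Real.exp (-s ^ 2)) - ∫ s in (0:ℝ)..t, (1:ℝ) := by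
    apply intervalIntegral.integral_sub
    · exact (Continuous.intervalIntegrable (by continuity) _ _)
    · exact intervalIntegrable_const
  rw [h1, intervalIntegral.integral_const]
  unfold g erf
  field_simp
  ring

lemma g_ge (t : ℝ) (ht : 0 ≤ t) : -(t ^ 3) / 3 ≤ g t := by
  rw [g_eq]
  have h2 : (∫ s in (0:ℝ)..t, (-(s ^ 2))) = -(t ^ 3) / 3 := by
    rw [intervalIntegral.integral_neg, integral_pow]
    norm_num
    ring
  rw [← h2]
  apply intervalIntegral.integral_mono_on ht
  · exact (Continuous.intervalIntegrable (by continuity) _ _)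
  · exact (Continuous.intervalIntegrable (by continuity) _ _)
  · intro s _
    have := Real.add_one_le_exp (-(s ^ 2))
    linarith

lemma g_zero : g 0 = 0 := by
  rw [g_eq, intervalIntegral.integral_same]

/-- The system `x' = (exp(-t²)-1)x` on `(-1,1)` is not contractive with respect to any
norm on `ℝ` (every norm on `ℝ` is a positive multiple of the absolute value): there is
no `c > 0` with `|x(t₂,t₁,a) - x(t₂,t₁,b)| ≤ exp(-(t₂-t₁)c)|a-b|` for all
`t₂ ≥ t₁ ≥ 0` and `a, b ∈ (-1,1)`. -/
theorem stmt2 :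
    ¬ ∃ c : ℝ, 0 < c ∧
      ∀ t₁ t₂ : ℝ, 0 ≤ t₁ → t₁ ≤ t₂ → ∀ a ∈ Ioo (-1 : ℝ) 1, ∀ b ∈ Ioo (-1 : ℝ) 1,
        |sol t₂ t₁ a - sol t₂ t₁ b| ≤ Real.exp (-(t₂ - t₁) * c) * |a - b| := by
  rintro ⟨c, hc, h⟩
  set t := Real.sqrt c with ht
  have htpos : 0 < t := Real.sqrt_pos.mpr hc
  have key := h 0 t le_rfl htpos.le (1/2) (by norm_num) 0 (by norm_num)
  simp only [sol, g_zero, sub_zero, mul_zero] at key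
  rw [abs_of_pos (by positivity : (0:ℝ) < Real.exp (g t) * (1/2)), show |(1:ℝ)/2| = 1/2 by norm_num] at key
  have h4 : Real.exp (g t) ≤ Real.exp (-t * c) := by nlinarith [Real.exp_pos (g t), Real.exp_pos (-t * c)]
  have h5 : g t ≤ -t * c := Real.exp_le_exp.mp h4
  have h6 := g_ge t htpos.le
  have h7 : t ^ 2 = c := Real.sq_sqrt hc.le
  nlinarith [htpos, sq_nonneg t]
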